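/- With the fusion product ⊗ on ℤ⟨Γ⟩ as above, for any letters g_1,…,g_k ∈ Γ with k ≥ 2, the recursion b_{(g_1,…,g_k)} = b_{(g_1,…,g_{k-1})} ⊗ b_{(g_k)} − b_{(g_1,…,g_{k-2},g_{k-1}g_k)} − δ_{g_{k-1}g_k = e}·b_{(g_1,…,g_{k-2})} holds, where e is the identity of Γ and δ is the Kronecker delta. -/
import Mathlib


/-- Involution on words: reverse and invert letters. -/
def wordInv {Γ : Type*} [Group Γ] (w : List Γ) : List Γ := (w.map (·⁻¹)).reverse

/-- Fusion of two words: multiply the last letter of `u` with the first letter of `v`. -/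
def fuse {Γ : Type*} [Group Γ] (u v : List Γ) : List Γ :=
  match u.getLast?, v with
  | some a, b :: t => u.dropLast ++ (a * b) :: t
  | _, _ => u ++ v

open scoped Classical in
/-- The fusion product on basis elements:
`b_x ⊗ b_y = Σ_{x=u·t, y=t̄·v} b_{u·v} + Σ_{x=u·t, y=t̄·v, u≠∅, v≠∅} b_{u∗v}`. -/
noncomputable def basisMul {Γ : Type*} [Group Γ] (x y : List Γ) : List Γ →₀ ℤ :=
  ∑ k ∈ Finset.range (min x.length y.length + 1),
    if wordInv (x.drop (x.length - k)) = y.take k then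
      Finsupp.single (x.take (x.length - k) ++ y.drop k) 1 +
        (if k < x.length ∧ k < y.length then
          Finsupp.single (fuse (x.take (x.length - k)) (y.drop k)) 1 else 0)
    else 0

/-- The fusion product `⊗` on the free `ℤ`-module `ℤ⟨Γ⟩` on words over `Γ`,
extended bilinearly from the fusion rules. -/
noncomputable def fmul {Γ : Type*} [Group Γ] (α β : List Γ →₀ ℤ) : List Γ →₀ ℤ :=
  α.sum fun x a => β.sum fun y b => (a * b) • basisMul x y


open scoped Classical

lemma fmul_single_single {Γ : Type*} [Group Γ] (x y : List Γ) :
    fmul (Finsupp.single x (1:ℤ)) (Finsupp.single y 1) = basisMul x y := by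
  unfold fmul
  rw [Finsupp.sum_single_index, Finsupp.sum_single_index] <;> simp

lemma basisMul_comp {Γ : Type*} [Group Γ] (w : List Γ) (g h : Γ) :
    basisMul (w ++ [g]) [h] =
      Finsupp.single (w ++ [g, h]) 1 + Finsupp.single (w ++ [g * h]) 1
        + (if g * h = 1 then Finsupp.single w 1 else 0) := by
  unfold basisMul
  have hlen : (w ++ [g]).length = w.length + 1 := by simp
  have hmin : min (w ++ [g]).length [h].length = 1 := by simp
  rw [hmin]
  rw [Finset.sum_range_succ, Finset.sum_range_one]
  have h0 : wordInv ((w ++ [g]).drop ((w ++ [g]).length - 0)) = [h].take 0 := by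
    simp [wordInv]
  rw [if_pos h0]
  have h1cond : (wordInv ((w ++ [g]).drop ((w ++ [g]).length - 1)) = [h].take 1) ↔ g * h = 1 := by
    rw [hlen]
    simp only [wordInv, List.drop_append]
    simp
    constructor
    · rintro rfl; simp
    · intro hc; exact (eq_inv_of_mul_eq_one_right hc).symm
  have hdrop0 : [h].drop 0 = [h] := rfl
  have htake : (w ++ [g]).take ((w ++ [g]).length - 0) = w ++ [g] := by simp
  have htake1 : (w ++ [g]).take ((w ++ [g]).length - 1) = w := by
    rw [hlen]; simp
  have hfuse : fuse (w ++ [g]) [h] = w ++ [g * h] := by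
    unfold fuse
    simp
  rw [htake, hdrop0, hfuse]
  have hc0 : (0 < (w ++ [g]).length ∧ 0 < [h].length) := by simp
  rw [if_pos hc0]
  by_cases hgh : g * h = 1
  · rw [if_pos (h1cond.mpr hgh), if_pos hgh, htake1]
    have : ¬ (1 < (w ++ [g]).length ∧ 1 < [h].length) := by simp
    rw [if_neg this]
    simp
  · rw [if_neg (fun hc => hgh (h1cond.mp hc)), if_neg hgh]
    simp

/-- The recursion
`b_{(g_1,…,g_k)} = b_{(g_1,…,g_{k-1})} ⊗ b_{(g_k)} − b_{(g_1,…,g_{k-2},g_{k-1}g_k)} − δ_{g_{k-1}g_k=e} b_{(g_1,…,g_{k-2})}`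
for the fusion product, for words of length `k ≥ 2` (here `w = (g_1,…,g_{k-2})`,
`g = g_{k-1}`, `h = g_k`). -/
theorem fusion_basis_recursion {Γ : Type*} [Group Γ] (w : List Γ) (g h : Γ) :
    Finsupp.single (w ++ [g, h]) (1 : ℤ) =
      fmul (Finsupp.single (w ++ [g]) 1) (Finsupp.single [h] 1)
        - Finsupp.single (w ++ [g * h]) 1
        - (if g * h = 1 then Finsupp.single w 1 else 0) := by
  rw [fmul_single_single, basisMul_comp]
  abel
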